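/- In the decomposition U = O·R with O ∈ OT^Δ and R ∈ ST^Δ, one has R² = φ_Δ(U)·U and O = U·(√(φ_Δ(U)U))⁻¹, where √ denotes the unique unipotent lower-triangular square root. -/

import Mathlib

/-! Since `φ_Δ` is an anti-automorphism, `φ_Δ(U) U = φ_Δ(R) φ_Δ(O) O R = R O⁻¹ O R = R²`.
A unipotent lower-triangular square root is unique when `2 ≠ 0`: below the diagonal,
`(S²)ᵢⱼ = 2 Sᵢⱼ + ∑_{j<k<i} Sᵢₖ Sₖⱼ`, so the entries of `S` are determined from `S²` by induction
on the distance to the diagonal. Hence any such root of `φ_Δ(U) U` is `R`, and `O = U R⁻¹`. -/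

open Matrix

def UnipLT {n : ℕ} {K : Type*} [Field K] (M : Matrix (Fin n) (Fin n) K) : Prop :=
  (∀ i, M i i = 1) ∧ ∀ i j : Fin n, i < j → M i j = 0

noncomputable def phiD {n : ℕ} {K : Type*} [Field K]
    (Δ M : Matrix (Fin n) (Fin n) K) : Matrix (Fin n) (Fin n) K :=
  Δ * Mᵀ * Δ⁻¹

section

variable {n : ℕ} {K : Type*} [Field K]

theorem phiD_mul {Δ : Matrix (Fin n) (Fin n) K} (hΔ : IsUnit Δ.det)
    (A B : Matrix (Fin n) (Fin n) K) : phiD Δ (A * B) = phiD Δ B * phiD Δ A := by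
  simp only [phiD, transpose_mul, Matrix.mul_assoc, nonsing_inv_mul_cancel_left _ _ hΔ]

theorem phiD_mul_self_eq_sq {Δ O R : Matrix (Fin n) (Fin n) K} (hΔ : IsUnit Δ.det)
    (hO : IsUnit O.det) (hOorth : phiD Δ O = O⁻¹) (hRsym : phiD Δ R = R) :
    phiD Δ (O * R) * (O * R) = R ^ 2 := by
  rw [phiD_mul hΔ, hOorth, hRsym, sq, Matrix.mul_assoc, nonsing_inv_mul_cancel_left _ _ hO]

namespace UnipLT

theorem isUnit_det {M : Matrix (Fin n) (Fin n) K} (hM : UnipLT M) : IsUnit M.det := by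
  rw [det_of_isLowerTriangular M fun i j hij => hM.2 i j hij]
  simp [hM.1]

theorem sq_apply_of_lt {S : Matrix (Fin n) (Fin n) K} (hS : UnipLT S) {i j : Fin n}
    (hji : j < i) : (S ^ 2) i j = 2 * S i j + ∑ k ∈ Finset.Ioo j i, S i k * S k j := by
  have hsupp : ∀ k ∉ Finset.Icc j i, S i k * S k j = 0 := by
    intro k hk
    rcases not_and_or.mp (Finset.mem_Icc.not.mp hk) with hkj | hik
    · simp [hS.2 k j (not_le.mp hkj)]
    · simp [hS.2 i k (not_le.mp hik)]
  rw [sq, mul_apply, ← Finset.sum_subset (Finset.subset_univ _) (fun k _ hk => hsupp k hk),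
    Finset.Icc_eq_cons_Ioc hji.le, Finset.sum_cons, Finset.Ioc_eq_cons_Ioo hji, Finset.sum_cons,
    hS.1 i, hS.1 j]
  ring

theorem eq_of_sq_eq [NeZero (2 : K)] {S R : Matrix (Fin n) (Fin n) K} (hS : UnipLT S)
    (hR : UnipLT R) (h : S ^ 2 = R ^ 2) : S = R := by
  suffices ∀ d : ℕ, ∀ i j : Fin n, (i : ℕ) < j + d → S i j = R i j from
    Matrix.ext fun i j => this (i + 1) i j (by omega)
  intro d
  induction d with
  | zero => exact fun i j hij => by rw [hS.2 i j hij, hR.2 i j hij]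
  | succ d ih =>
    intro i j hij
    rcases lt_trichotomy i j with hlt | rfl | hji
    · rw [hS.2 i j hlt, hR.2 i j hlt]
    · rw [hS.1, hR.1]
    have hsum : ∑ k ∈ Finset.Ioo j i, S i k * S k j = ∑ k ∈ Finset.Ioo j i, R i k * R k j := by
      refine Finset.sum_congr rfl fun k hk => ?_
      obtain ⟨hjk, hki⟩ := Finset.mem_Ioo.mp hk
      rw [ih i k (by omega), ih k j (by omega)]
    have h2 : 2 * S i j = 2 * R i j := by
      have := congrFun₂ h i j
      rwa [hS.sq_apply_of_lt hji, hR.sq_apply_of_lt hji, hsum, add_left_inj] at this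
    exact mul_left_cancel₀ two_ne_zero h2

end UnipLT

end

theorem OR_factorization_formulas_general {n : ℕ} {K : Type*} [Field K] [CharZero K]
    (Δ : Matrix (Fin n) (Fin n) K) (hdet : IsUnit Δ.det)
    (U O R : Matrix (Fin n) (Fin n) K)
    (hO : UnipLT O) (hOorth : phiD Δ O = O⁻¹)
    (hR : UnipLT R) (hRsym : phiD Δ R = R)
    (hfact : U = O * R) :
    R ^ 2 = phiD Δ U * U ∧
    ∀ S : Matrix (Fin n) (Fin n) K, UnipLT S → S ^ 2 = phiD Δ U * U →
      O = U * S⁻¹ := by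
  have hsq : phiD Δ U * U = R ^ 2 := by
    rw [hfact]; exact phiD_mul_self_eq_sq hdet hO.isUnit_det hOorth hRsym
  refine ⟨hsq.symm, fun S hS hSsq => ?_⟩
  rw [hS.eq_of_sq_eq hR (hSsq.trans hsq), hfact, mul_nonsing_inv_cancel_right _ _ hR.isUnit_det]

/-- in the decomposition U = O·R, one has R² = φ_Δ(U)·U and
O = U·S⁻¹ for the unique unipotent lower-triangular square root S of φ_Δ(U)·U. -/
theorem OR_factorization_formulas {n : ℕ} {K : Type*} [Field K] [CharZero K]
    (Δ : Matrix (Fin n) (Fin n) K) (hdet : IsUnit Δ.det)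
    (hsym : Δᵀ = Δ ∨ Δᵀ = -Δ)
    (U O R : Matrix (Fin n) (Fin n) K)
    (hU : UnipLT U) (hU' : UnipLT (phiD Δ U))
    (hO : UnipLT O) (hOorth : phiD Δ O = O⁻¹)
    (hR : UnipLT R) (hRsym : phiD Δ R = R)
    (hfact : U = O * R) :
    R ^ 2 = phiD Δ U * U ∧
    ∀ S : Matrix (Fin n) (Fin n) K, UnipLT S → S ^ 2 = phiD Δ U * U →
      O = U * S⁻¹ :=
  OR_factorization_formulas_general Δ hdet U O R hO hOorth hR hRsym hfact
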